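/- If ψ ⊆ PG(n,2) is a point-set with |ψ| odd, then the reduced (squarefree) polynomial Q of ψ has degree at most n; if |ψ| is even, then Q has degree exactly n+1. -/
import Mathlib


/-- Evaluation of a squarefree (multilinear) polynomial given by its coefficients. -/
def mEval {ι : Type*} [Fintype ι] [DecidableEq ι]
    (c : Finset ι → ZMod 2) (x : ι → ZMod 2) : ZMod 2 :=
  ∑ s : Finset ι, c s * ∏ i ∈ s, x i

/-- Degree of a squarefree polynomial given by its coefficients. -/
def mDeg {ι : Type*} [Fintype ι] [DecidableEq ι] (c : Finset ι → ZMod 2) : ℕ :=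
  (Finset.univ.filter fun s : Finset ι => c s ≠ 0).sup Finset.card

lemma sum_monomial {ι : Type*} [Fintype ι] [DecidableEq ι] (s : Finset ι) :
    ∑ x : ι → ZMod 2, ∏ i ∈ s, x i = if s = Finset.univ then 1 else 0 := by
  have h1 : ∀ x : ι → ZMod 2, ∏ i ∈ s, x i = ∏ i, (if i ∈ s then x i else 1) := by
    intro x
    rw [← Finset.prod_filter]
    congr 1
    ext i; simp
  simp_rw [h1]
  rw [← Fintype.prod_sum (fun i (a : ZMod 2) => if i ∈ s then a else 1)]
  have h2 : ∀ i : ι, (∑ a : ZMod 2, if i ∈ s then a else 1) = if i ∈ s then 1 else 0 := by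
    intro i
    by_cases hi : i ∈ s <;> simp [hi] <;> decide
  simp_rw [h2]
  by_cases hs : s = Finset.univ
  · simp [hs]
  · rw [if_neg hs]
    obtain ⟨i, hi⟩ : ∃ i, i ∉ s := by
      by_contra h
      push_neg at h
      exact hs (Finset.eq_univ_iff_forall.2 h)
    exact Finset.prod_eq_zero (Finset.mem_univ i) (by simp [hi])

lemma sum_mEval {ι : Type*} [Fintype ι] [DecidableEq ι] (c : Finset ι → ZMod 2) :
    ∑ x : ι → ZMod 2, mEval c x = c Finset.univ := by
  unfold mEval
  rw [Finset.sum_comm]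
  simp_rw [← Finset.mul_sum, sum_monomial]
  simp

theorem stmt1 (n : ℕ) (ψ : Finset (Fin (n + 1) → ZMod 2)) (hψ : (0 : Fin (n + 1) → ZMod 2) ∉ ψ)
    (c : Finset (Fin (n + 1)) → ZMod 2) (hc0 : c ∅ = 0)
    (hrep : ∀ x, mEval c x = 0 ↔ x = 0 ∨ x ∈ ψ) :
    (Odd ψ.card → mDeg c ≤ n) ∧ (Even ψ.card → mDeg c = n + 1) := by
  have hone : ∀ a : ZMod 2, a ≠ 0 → a = 1 := by decide
  -- compute c univ as a parity
  have hval : ∀ x : Fin (n + 1) → ZMod 2,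
      mEval c x = if x ∈ insert 0 ψ then 0 else 1 := by
    intro x
    by_cases hx : x ∈ insert 0 ψ
    · rw [if_pos hx]
      rcases Finset.mem_insert.1 hx with h | h
      · exact (hrep x).2 (Or.inl h)
      · exact (hrep x).2 (Or.inr h)
    · rw [if_neg hx]
      apply hone
      intro h0
      rcases (hrep x).1 h0 with h | h
      · exact hx (Finset.mem_insert.2 (Or.inl h))
      · exact hx (Finset.mem_insert.2 (Or.inr h))
  have hcount : c Finset.univ = (ψ.card : ZMod 2) + 1 := by
    rw [← sum_mEval c]
    simp_rw [hval]
    have hsub : insert (0 : Fin (n + 1) → ZMod 2) ψ ⊆ Finset.univ := Finset.subset_univ _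
    rw [Finset.sum_ite, Finset.sum_const, Finset.sum_const, smul_zero, zero_add,
      nsmul_eq_mul, mul_one]
    have hcard : ((Finset.univ.filter fun x => ¬ x ∈ insert (0 : Fin (n + 1) → ZMod 2) ψ).card : ℕ)
        = Fintype.card (Fin (n + 1) → ZMod 2) - (ψ.card + 1) := by
      rw [Finset.filter_not, Finset.filter_mem_eq_inter, Finset.univ_inter,
        Finset.card_sdiff_of_subset hsub, Finset.card_univ, Finset.card_insert_of_notMem hψ]
    rw [hcard]
    have hle : ψ.card + 1 ≤ Fintype.card (Fin (n + 1) → ZMod 2) := by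
      rw [← Finset.card_insert_of_notMem hψ, ← Finset.card_univ]
      exact Finset.card_le_card hsub
    rw [Nat.cast_sub hle]
    have h2 : ((Fintype.card (Fin (n + 1) → ZMod 2) : ℕ) : ZMod 2) = 0 := by
      rw [Fintype.card_fun, ZMod.card, Fintype.card_fin]
      push_cast
      rw [show (2 : ZMod 2) = 0 by decide]
      exact zero_pow (Nat.succ_ne_zero n)
    rw [h2]
    push_cast
    rw [zero_sub, CharTwo.neg_eq]
  constructor
  · intro hodd
    have huniv : c Finset.univ = 0 := by
      rw [hcount]
      obtain ⟨k, hk⟩ := hodd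
      rw [hk]
      push_cast
      ring_nf
      rw [show (2 : ZMod 2) = 0 by decide]
      ring
    apply Finset.sup_le
    intro s hs
    rw [Finset.mem_filter] at hs
    have hsne : s ≠ Finset.univ := fun h => hs.2 (h ▸ huniv)
    have : s.card < Fintype.card (Fin (n + 1)) :=
      lt_of_le_of_ne (Finset.card_le_univ s) (fun h => hsne (Finset.card_eq_iff_eq_univ s |>.1 h))
    simpa [Fintype.card_fin] using Nat.lt_succ_iff.1 (by simpa [Fintype.card_fin] using this)
  · intro heven
    have huniv : c Finset.univ ≠ 0 := by
      rw [hcount]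
      obtain ⟨k, hk⟩ := heven
      rw [hk]
      push_cast
      ring_nf
      rw [show (2 : ZMod 2) = 0 by decide]
      simp
    apply le_antisymm
    · apply Finset.sup_le
      intro s hs
      simpa using Finset.card_le_univ s
    · have h := Finset.le_sup (f := Finset.card)
        (s := Finset.univ.filter fun s : Finset (Fin (n + 1)) => c s ≠ 0)
        (b := Finset.univ) (by simp [huniv])
      simpa [mDeg] using h
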